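/- Let Q_M be a unimodular symmetric bilinear form on a finitely generated free abelian group and K a characteristic element (i.e. Q(K,x) ≡ Q(x,x) mod 2 for all x). If K = d·A for some element A and odd integer d, then Q(K,K) is divisible by d². If d is even, then Q is even (Q(x,x) ≡ 0 mod 2 for all x) and Q(K,K) is divisible by 2d². -/

import Mathlib

/-!
Writing `K = d • A` gives `Q(K,K) = d² Q(A,A)`. When `d` is even, `Q(K,x) = d Q(A,x)` is even for
every `x`, so characteristicity forces every `Q(x,x)` to be even; in particular `Q(A,A)` is, which
gives the extra factor `2`.
-/

theorem LinearMap.apply_zsmul_zsmul_self {H : Type*} [AddCommGroup H] [Module ℤ H]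
    (Q : H →ₗ[ℤ] H →ₗ[ℤ] ℤ) (d : ℤ) (A : H) :
    Q (d • A) (d • A) = d ^ 2 * Q A A := by
  simp only [map_zsmul, LinearMap.smul_apply, smul_eq_mul]
  ring

def IsCharacteristic {H : Type*} [AddCommGroup H] [Module ℤ H] (Q : H →ₗ[ℤ] H →ₗ[ℤ] ℤ)
    (K : H) : Prop :=
  ∀ x : H, Q K x % 2 = Q x x % 2

theorem IsCharacteristic.apply_self_emod_two_eq_zero_of_eq_zsmul {H : Type*} [AddCommGroup H]
    [Module ℤ H] {Q : H →ₗ[ℤ] H →ₗ[ℤ] ℤ} {K A : H} {d : ℤ} (hchar : IsCharacteristic Q K)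
    (hK : K = d • A) (hd : Even d) (x : H) : Q x x % 2 = 0 := by
  have hKx : (2 : ℤ) ∣ Q K x := by
    rw [hK, map_zsmul, LinearMap.smul_apply, smul_eq_mul]
    exact hd.two_dvd.mul_right _
  rw [← hchar x]
  exact Int.emod_eq_zero_of_dvd hKx

theorem stmt_0_general {H : Type*} [AddCommGroup H] [Module ℤ H]
    (Q : H →ₗ[ℤ] H →ₗ[ℤ] ℤ)
    (K A : H) (d : ℤ)
    (hchar : ∀ x : H, Q K x % 2 = Q x x % 2)
    (hK : K = d • A) :
    (Odd d → d ^ 2 ∣ Q K K) ∧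
      (Even d → (∀ x : H, Q x x % 2 = 0) ∧ 2 * d ^ 2 ∣ Q K K) := by
  have hKK : Q K K = d ^ 2 * Q A A := hK ▸ Q.apply_zsmul_zsmul_self d A
  refine ⟨fun _ => ⟨Q A A, hKK⟩, fun hd => ?_⟩
  have hQeven := IsCharacteristic.apply_self_emod_two_eq_zero_of_eq_zsmul hchar hK hd
  obtain ⟨c, hc⟩ := Int.dvd_of_emod_eq_zero (hQeven A)
  exact ⟨hQeven, c, by rw [hKK, hc]; ring⟩

/-- A characteristic element `K` of a unimodular symmetric bilinear form `Q` on a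
finitely generated free abelian group: if `K = d • A` with `d` odd, then `d² ∣ Q(K,K)`;
if `d` is even then `Q` is even and `2d² ∣ Q(K,K)`. -/
theorem stmt_0 {H : Type*} [AddCommGroup H] [Module ℤ H]
    [Module.Free ℤ H] [Module.Finite ℤ H]
    (Q : H →ₗ[ℤ] H →ₗ[ℤ] ℤ)
    (hsymm : ∀ x y : H, Q x y = Q y x)
    (hunimod : Function.Bijective Q)
    (K A : H) (d : ℤ)
    (hchar : ∀ x : H, Q K x % 2 = Q x x % 2)
    (hK : K = d • A) :
    (Odd d → d ^ 2 ∣ Q K K) ∧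
      (Even d → (∀ x : H, Q x x % 2 = 0) ∧ 2 * d ^ 2 ∣ Q K K) :=
  stmt_0_general Q K A d hchar hK
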